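/- arXiv:1507.05955 — 5 statements merged into one kernel-verified Lean document; each statement's English description precedes it below -/
import Mathlib

section
/- Let X be a finite set equipped with two linear orders ≤₁ and ≤₂ such that the two orders have the same adjacency (neighbour) relation, i.e., for all x, y ∈ X, x is covered by y or y is covered by x with respect to ≤₁ if and only if x is covered by y or y is covered by x with respect to ≤₂. Then either the two orders are equal (x ≤₁ y ↔ x ≤₂ y for all x, y) or they are reverses of each other (x ≤₁ y ↔ y ≤₂ x for all x, y). -/
/-- `y` covers `x` with respect to the linear order `r`: `x < y` and no element lies
strictly between them. -/
def CoversWrt {X : Type*} (r : LinearOrder X) (x y : X) : Prop :=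
  r.lt x y ∧ ¬ ∃ z, r.lt x z ∧ r.lt z y

/-- `x` and `y` are adjacent (neighbours) w.r.t. `r`: one covers the other. -/
def AdjWrt {X : Type*} (r : LinearOrder X) (x y : X) : Prop :=
  CoversWrt r x y ∨ CoversWrt r y x

/-!
Enumerate `X` increasingly for `≤₁` as `e : Fin n → X`. Consecutive elements `e i`, `e (i + 1)`
are `≤₁`-neighbours, hence `≤₂`-neighbours. In a linear order an element has at most one
neighbour on each side, so the `≤₂`-direction of the step from `e i` to `e (i + 1)` cannot change
along the enumeration: `e` is strictly monotone or strictly antitone for `≤₂`.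
-/

open Function Order SimpleGraph

lemma adjWrt_iff_hasse_adj {X : Type*} [r : LinearOrder X] {x y : X} :
    AdjWrt r x y ↔ (hasse X).Adj x y := by
  simp [AdjWrt, CoversWrt, hasse_adj, CovBy]

lemma OrderIso.adjWrt_apply_iff {α X : Type*} [Preorder α] [r : LinearOrder X] (e : α ≃o X)
    (a b : α) : AdjWrt r (e a) (e b) ↔ (hasse α).Adj a b := by
  simp only [adjWrt_iff_hasse_adj, hasse_adj, apply_covBy_apply_iff]

section
variable {α β : Type*} [LinearOrder α] [LinearOrder β]

lemma lt_iff_lt_of_hasse_adj {x y z : β} (hxy : (hasse β).Adj x y) (hyz : (hasse β).Adj y z)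
    (hxz : x ≠ z) : x < y ↔ y < z := by
  rw [hasse_adj] at hxy hyz
  rcases hxy with hxy | hyx <;> rcases hyz with hyz | hzy
  · exact iff_of_true hxy.lt hyz.lt
  · exact absurd (hxy.unique_left hzy) hxz
  · exact absurd (hyx.unique_right hyz) hxz
  · exact iff_of_false hyx.lt.not_gt hzy.lt.not_gt

variable [SuccOrder α] [IsSuccArchimedean α] {f : α → β}

theorem strictMono_or_strictAnti_of_hasse_adj (hf : Injective f)
    (hadj : ∀ a b, a ⋖ b → (hasse β).Adj (f a) (f b)) : StrictMono f ∨ StrictAnti f := by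
  have step (a : α) (ha : ¬IsMax (succ a)) :
      f a < f (succ a) ↔ f (succ a) < f (succ (succ a)) := by
    have ha' : ¬IsMax a := fun h => ha (h.succ_eq.symm ▸ h)
    refine lt_iff_lt_of_hasse_adj (hadj _ _ (covBy_succ_of_not_isMax ha'))
      (hadj _ _ (covBy_succ_of_not_isMax ha)) (hf.ne ?_)
    exact ((lt_succ_of_not_isMax ha').trans (lt_succ_of_not_isMax ha)).ne
  have propagate (a b : α) (hab : a ≤ b) : ¬IsMax b → (f a < f (succ a) ↔ f b < f (succ b)) := by
    induction hab using Succ.rec with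
    | rfl => exact fun _ => Iff.rfl
    | succ n _ ih =>
      intro hn
      exact (ih fun h => hn (h.succ_eq.symm ▸ h)).trans (step n hn)
  by_cases hmono : ∀ a, ¬IsMax a → f a < f (succ a)
  · exact Or.inl (strictMono_of_lt_succ hmono)
  push Not at hmono
  obtain ⟨a₀, ha₀, hdown⟩ := hmono
  refine Or.inr (strictAnti_of_succ_lt fun b hb => ?_)
  have hb' : ¬f b < f (succ b) := by
    rcases le_total a₀ b with h | h
    · exact (propagate a₀ b h hb).not.mp hdown.not_gt
    · exact (propagate b a₀ h ha₀).not.mpr hdown.not_gt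
  exact (not_lt.mp hb').lt_of_ne (hf.ne (lt_succ_of_not_isMax hb).ne')

end

/-- If two linear orders on a finite set have the same adjacency
relation, then they are equal or reverses of each other. -/
theorem stmt4 {X : Type*} [Fintype X] (r₁ r₂ : LinearOrder X)
    (hadj : ∀ x y : X, AdjWrt r₁ x y ↔ AdjWrt r₂ x y) :
    (∀ x y : X, r₁.le x y ↔ r₂.le x y) ∨ (∀ x y : X, r₁.le x y ↔ r₂.le y x) := by
  -- `r₁` and `r₂` are both local instances, so which order is meant is always made explicit.
  let e := @monoEquivOfFin X _ r₁ _ rfl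
  have he (i j) (h : i ⋖ j) : (@hasse X r₂.toPreorder).Adj (e i) (e j) :=
    (@adjWrt_iff_hasse_adj X r₂ _ _).mp <| (hadj _ _).mp <|
      (@OrderIso.adjWrt_apply_iff _ X _ r₁ e i j).mpr (hasse_adj.mpr (Or.inl h))
  rcases @strictMono_or_strictAnti_of_hasse_adj _ X _ r₂ _ _ e e.toEquiv.injective he with h | h
  · refine Or.inl fun x y => ?_
    obtain ⟨i, rfl⟩ := e.toEquiv.surjective x
    obtain ⟨j, rfl⟩ := e.toEquiv.surjective y
    exact e.map_rel_iff.trans h.le_iff_le.symm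
  · refine Or.inr fun x y => ?_
    obtain ⟨i, rfl⟩ := e.toEquiv.surjective x
    obtain ⟨j, rfl⟩ := e.toEquiv.surjective y
    exact e.map_rel_iff.trans h.le_iff_ge.symm
end

section
/- Let X be a finite set of n elements with a linear order ≤, and let k, t be integers with 1 ≤ t ≤ k−1 and k−t+1 ≤ n. Let T be the set of the k−t+1 largest elements of X under ≤, let u be the smallest element of T and v the second smallest element of T. Let ≤' be the linear order on X obtained from ≤ by transposing u and v (i.e., the order induced by composing with the permutation swapping u and v). Then for every k-element subset Q of X that does not contain all of T, the t-th smallest element of Q with respect to ≤ equals the t-th smallest element of Q with respect to ≤'. In particular, any family of k-element queries no member of which contains T cannot distinguish the orders ≤ and ≤'. -/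
/-!
Since `Q` misses an element of `T`, at least `k - (k - t) = t` elements of `Q` lie outside `T`,
hence below both `u` and `v` in either order. So neither `u` nor `v` can be the `t`-th smallest
element of `Q` for either order, while for every other `x` the transposition of the adjacent
elements `u ⋖ v` does not change which elements are below `x`.
-/

/-- `x` is the `t`-th smallest element of the finite set `Q` with respect to the strict
order `lt`: it lies in `Q` and exactly `t - 1` elements of `Q` are strictly below it. -/
def IsNthSmallestBy {X : Type*} (lt : X → X → Prop) (Q : Finset X) (t : ℕ) (x : X) : Prop :=
  x ∈ Q ∧ {y | y ∈ Q ∧ lt y x}.ncard = t - 1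

open Finset Equiv

theorem Equiv.swap_lt_swap_iff_of_covBy {α : Type*} [LinearOrder α] [DecidableEq α] {u v x : α}
    (huv : u ⋖ v) (hxu : x ≠ u) (hxv : x ≠ v) (y : α) :
    swap u v y < swap u v x ↔ y < x := by
  have hux : u < x ↔ v < x := by
    rw [huv.lt_iff_le_right, le_iff_lt_or_eq, or_iff_left (Ne.symm hxv)]
  rw [swap_apply_of_ne_of_ne hxu hxv]
  rcases eq_or_ne y u with rfl | hyu
  · rw [swap_apply_left, hux]
  rcases eq_or_ne y v with rfl | hyv
  · rw [swap_apply_right, hux]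
  · rw [swap_apply_of_ne_of_ne hyu hyv]

theorem Finset.card_lt_card_sdiff_add_card {α : Type*} [DecidableEq α] {Q T : Finset α}
    (h : ¬T ⊆ Q) : #Q < #(Q \ T) + #T := by
  have hinter : #(Q ∩ T) < #T := card_lt_card <|
    inter_subset_right.ssubset_of_ne fun hQT => h (hQT ▸ inter_subset_left)
  have := card_sdiff_add_card_inter Q T
  omega

section IsNthSmallestBy

variable {X : Type*} {lt lt' : X → X → Prop} {Q : Finset X} {t : ℕ} {x : X}

theorem isNthSmallestBy_congr (h : ∀ y ∈ Q, lt y x ↔ lt' y x) :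
    IsNthSmallestBy lt Q t x ↔ IsNthSmallestBy lt' Q t x := by
  have hbelow : {y | y ∈ Q ∧ lt y x} = {y | y ∈ Q ∧ lt' y x} :=
    Set.ext fun y => and_congr_right (h y)
  rw [IsNthSmallestBy, IsNthSmallestBy, hbelow]

theorem not_isNthSmallestBy_of_le_card (S : Finset X) (hSQ : S ⊆ Q) (hSx : ∀ y ∈ S, lt y x)
    (ht : 1 ≤ t) (hSt : t ≤ #S) : ¬IsNthSmallestBy lt Q t x := by
  rintro ⟨-, hcount⟩
  have hS : (S : Set X) ⊆ {y | y ∈ Q ∧ lt y x} := fun y hy => ⟨hSQ hy, hSx y hy⟩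
  have hfin : {y | y ∈ Q ∧ lt y x}.Finite := Q.finite_toSet.subset fun _ hy => hy.1
  have := Set.ncard_le_ncard hS hfin
  rw [Set.ncard_coe_finset] at this
  omega

end IsNthSmallestBy

theorem stmt6_general {X : Type*} [LinearOrder X] [DecidableEq X] (k t : ℕ)
    (ht1 : 1 ≤ t) (htk : t ≤ k - 1)
    (T : Finset X) (hTcard : T.card = k - t + 1)
    (hTtop : ∀ x ∈ T, ∀ y ∉ T, y < x)
    (u v : X) (hu : u ∈ T) (huv : u < v)
    (hvsec : ∀ w ∈ T, w ≠ u → v ≤ w) :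
    ∀ Q : Finset X, Q.card = k → ¬ T ⊆ Q →
      ∀ x : X, IsNthSmallestBy (· < ·) Q t x ↔
        IsNthSmallestBy (fun a b => Equiv.swap u v a < Equiv.swap u v b) Q t x := by
  intro Q hQ hTQ x
  have hlow : ∀ y ∉ T, ∀ w, u ≤ w → y < w := fun y hy _ hw => (hTtop u hu y hy).trans_le hw
  have hcov : u ⋖ v := ⟨huv, fun w huw hwv => by
    have hwT : w ∈ T := by_contra fun hw => (hlow w hw u le_rfl).not_gt huw
    exact (hvsec w hwT huw.ne').not_gt hwv⟩
  by_cases hx : x = u ∨ x = v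
  · have hcard : t ≤ #(Q \ T) := by have := card_lt_card_sdiff_add_card hTQ; omega
    have hfix : ∀ y ∉ T, swap u v y = y := fun y hy =>
      swap_apply_of_ne_of_ne (hlow y hy u le_rfl).ne (hlow y hy v huv.le).ne
    have hux : u ≤ x ∧ u ≤ swap u v x := by rcases hx with rfl | rfl <;> simp [huv.le]
    have hbelow : ∀ y ∈ Q \ T, y < x ∧ swap u v y < swap u v x := fun y hy => by
      have hyT := (mem_sdiff.mp hy).2
      exact ⟨hlow y hyT x hux.1, by simpa only [hfix y hyT] using hlow y hyT _ hux.2⟩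
    exact iff_of_false
      (not_isNthSmallestBy_of_le_card _ sdiff_subset (fun y hy => (hbelow y hy).1) ht1 hcard)
      (not_isNthSmallestBy_of_le_card _ sdiff_subset (fun y hy => (hbelow y hy).2) ht1 hcard)
  · obtain ⟨hxu, hxv⟩ := not_or.mp hx
    exact isNthSmallestBy_congr fun y _ => (swap_lt_swap_iff_of_covBy hcov hxu hxv y).symm

/-- Let `X` have `n` elements, `1 ≤ t ≤ k - 1`, `k - t + 1 ≤ n`.
Let `T` be the set of the `k - t + 1` largest elements of `X`, `u` the smallest and
`v` the second smallest element of `T`, and let `≤'` be the order obtained from `≤` by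
transposing `u` and `v`. Then every `k`-element query that does not contain all of `T`
returns the same `t`-th smallest element under `≤` and under `≤'`; in particular a
family of such queries cannot distinguish the two orders. -/
theorem stmt6 {X : Type*} [Fintype X] [LinearOrder X] [DecidableEq X] (n k t : ℕ)
    (hn : Fintype.card X = n) (ht1 : 1 ≤ t) (htk : t ≤ k - 1) (hkn : k - t + 1 ≤ n)
    (T : Finset X) (hTcard : T.card = k - t + 1)
    (hTtop : ∀ x ∈ T, ∀ y ∉ T, y < x)
    (u v : X) (hu : u ∈ T) (hv : v ∈ T) (huv : u < v)
    (humin : ∀ w ∈ T, u ≤ w) (hvsec : ∀ w ∈ T, w ≠ u → v ≤ w) :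
    ∀ Q : Finset X, Q.card = k → ¬ T ⊆ Q →
      ∀ x : X, IsNthSmallestBy (· < ·) Q t x ↔
        IsNthSmallestBy (fun a b => Equiv.swap u v a < Equiv.swap u v b) Q t x :=
  stmt6_general k t ht1 htk T hTcard hTtop u v hu huv hvsec
end

section
/- Let X be a set with a linear order, let k, t be integers with 1 ≤ t ≤ k, and let a, b, c ∈ X satisfy a < b < c. Let Q be a (k−2)-element subset of X disjoint from {a, b, c}. If the t-th smallest element of Q ∪ {a, b} is a, then the t-th smallest element of Q ∪ {b, c} is not c. -/
/-- `x` is the `t`-th smallest element of the finite set `Q`: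
it lies in `Q` and exactly `t - 1` elements of `Q` are strictly below it. -/
def IsNthSmallest {X : Type*} [LinearOrder X] (Q : Finset X) (t : ℕ) (x : X) : Prop :=
  x ∈ Q ∧ {y | y ∈ Q ∧ y < x}.ncard = t - 1

/-
Below `a` the set `Q ∪ {a, b}` has only elements of `Q`, all of which also lie below `c` in
`Q ∪ {b, c}`; the latter set has `b` below `c` in addition. So `c` has strictly more
predecessors in `Q ∪ {b, c}` than `a` has in `Q ∪ {a, b}`, and the two ranks cannot agree.
-/

theorem IsNthSmallest.not_ssubset {X : Type*} [LinearOrder X] {s s' : Finset X} {t : ℕ}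
    {x x' : X} (h : IsNthSmallest s t x) (h' : IsNthSmallest s' t x') :
    ¬ {y | y ∈ s ∧ y < x} ⊂ {y | y ∈ s' ∧ y < x'} := fun hss =>
  (Set.ncard_lt_ncard hss (s'.finite_toSet.subset fun _ hy => hy.1)).ne (h.2.trans h'.2.symm)

theorem setOf_mem_union_pair_lt_ssubset {X : Type*} [LinearOrder X] [DecidableEq X]
    {a b c : X} {Q : Finset X} (hab : a < b) (hbc : b < c) (hb : b ∉ Q) :
    {y | y ∈ Q ∪ {a, b} ∧ y < a} ⊂ {y | y ∈ Q ∪ {b, c} ∧ y < c} := by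
  have hsub : {y | y ∈ Q ∪ {a, b} ∧ y < a} ⊆ {y | y ∈ Q ∪ {b, c} ∧ y < c} := by
    rintro y ⟨hy, hya⟩
    have hyQ : y ∈ Q := by
      simp only [Finset.mem_union, Finset.mem_insert, Finset.mem_singleton] at hy
      rcases hy with hy | rfl | rfl
      · exact hy
      · exact absurd hya (lt_irrefl y)
      · exact absurd hab hya.not_gt
    exact ⟨Finset.mem_union_left _ hyQ, hya.trans (hab.trans hbc)⟩
  refine (Set.ssubset_iff_of_subset hsub).2 ⟨b, ⟨by simp, hbc⟩, ?_⟩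
  rintro ⟨-, hba⟩
  exact hab.not_gt hba

theorem stmt8_general {X : Type*} [LinearOrder X] [DecidableEq X] (t : ℕ)
    (a b c : X) (hab : a < b) (hbc : b < c)
    (Q : Finset X)
    (hb : b ∉ Q)
    (h : IsNthSmallest (Q ∪ {a, b}) t a) :
    ¬ IsNthSmallest (Q ∪ {b, c}) t c := fun h' =>
  h.not_ssubset h' (setOf_mem_union_pair_lt_ssubset hab hbc hb)

/-- Let `a < b < c` and let `Q` be a `(k-2)`-set disjoint from
`{a, b, c}`. If the `t`-th smallest element of `Q ∪ {a, b}` is `a`, then the `t`-th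
smallest element of `Q ∪ {b, c}` is not `c`. -/
theorem stmt8 {X : Type*} [LinearOrder X] [DecidableEq X] (k t : ℕ)
    (ht1 : 1 ≤ t) (htk : t ≤ k)
    (a b c : X) (hab : a < b) (hbc : b < c)
    (Q : Finset X) (hQcard : Q.card = k - 2)
    (ha : a ∉ Q) (hb : b ∉ Q) (hc : c ∉ Q)
    (h : IsNthSmallest (Q ∪ {a, b}) t a) :
    ¬ IsNthSmallest (Q ∪ {b, c}) t c :=
  stmt8_general t a b c hab hbc Q hb h
end

section
/- Let X be a finite set of n elements with a linear order, and let k, t be integers with 1 ≤ t, 2t ≤ k and n ≥ k+1. Let S be the set of the t−1 smallest elements of X and L the set of the k−t largest elements of X. Let Y ⊆ X be any subset with |Y| = t−1, and let a, b ∈ X \ (S ∪ L ∪ Y) with a < b. Then there exists a k-element subset Q of X with Y ∪ {a, b} ⊆ Q ⊆ Y ∪ {a, b} ∪ S ∪ L such that the t-th smallest element of Q is a. -/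
/-!
The elements of `Y` below `a`, together with `S`, form a pool of at least `t - 1` elements
below `a`; the elements of `Y` above `a`, together with `b` and `L`, form a pool of at least
`k - t` elements above `a`. Since `|Y| = t - 1` and `t ≤ k - t`, the mandatory elements fit on
either side, so we may take `t - 1` elements of the lower pool and `k - t` of the upper pool,
each containing the mandatory ones, and add `a`.
-/

open Finset

section LinearOrder

variable {α : Type*} [LinearOrder α] [DecidableEq α] {P U : Finset α} {a : α}

theorem card_insert_union_of_lt (hP : ∀ p ∈ P, p < a) (hU : ∀ u ∈ U, a < u) :
    #(insert a (P ∪ U)) = #P + #U + 1 := by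
  have hPU : Disjoint P U :=
    disjoint_left.2 fun x hxP hxU => lt_asymm (hP x hxP) (hU x hxU)
  have ha : a ∉ P ∪ U := by
    simp only [mem_union, not_or]
    exact ⟨fun h => lt_irrefl a (hP a h), fun h => lt_irrefl a (hU a h)⟩
  rw [card_insert_of_notMem ha, card_union_of_disjoint hPU]

theorem isNthSmallest_insert_union (hP : ∀ p ∈ P, p < a) (hU : ∀ u ∈ U, a < u) :
    IsNthSmallest (insert a (P ∪ U)) (#P + 1) a := by
  refine ⟨mem_insert_self _ _, ?_⟩
  have hbelow : {y | y ∈ insert a (P ∪ U) ∧ y < a} = (P : Set α) := by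
    ext y
    simp only [Set.mem_ofPred_eq, mem_insert, mem_union, mem_coe]
    constructor
    · rintro ⟨rfl | hy | hy, hya⟩
      · exact absurd hya (lt_irrefl y)
      · exact hy
      · exact absurd hya (lt_asymm (hU y hy))
    · exact fun hy => ⟨Or.inr (Or.inl hy), hP y hy⟩
  rw [hbelow, Set.ncard_coe_finset, Nat.add_sub_cancel]

theorem exists_card_eq_isNthSmallest {A B : Finset α} {i j : ℕ}
    (hAP : A ⊆ P) (hP : ∀ p ∈ P, p < a) (hBU : B ⊆ U) (hU : ∀ u ∈ U, a < u)
    (hAi : #A ≤ i) (hiP : i ≤ #P) (hBj : #B ≤ j) (hjU : j ≤ #U) :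
    ∃ Q, #Q = i + j + 1 ∧ insert a (A ∪ B) ⊆ Q ∧ Q ⊆ insert a (P ∪ U) ∧
      IsNthSmallest Q (i + 1) a := by
  obtain ⟨P', hAP', hP'P, rfl⟩ := exists_subsuperset_card_eq hAP hAi hiP
  obtain ⟨U', hBU', hU'U, rfl⟩ := exists_subsuperset_card_eq hBU hBj hjU
  have hP' : ∀ p ∈ P', p < a := fun p hp => hP p (hP'P hp)
  have hU' : ∀ u ∈ U', a < u := fun u hu => hU u (hU'U hu)
  exact ⟨insert a (P' ∪ U'), card_insert_union_of_lt hP' hU',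
    insert_subset_insert a (union_subset_union hAP' hBU'),
    insert_subset_insert a (union_subset_union hP'P hU'U), isNthSmallest_insert_union hP' hU'⟩

end LinearOrder

theorem stmt9_general {X : Type*} [LinearOrder X] [DecidableEq X] (k t : ℕ)
    (ht1 : 1 ≤ t) (hk : 2 * t ≤ k)
    (S L : Finset X)
    (hScard : S.card = t - 1) (hSbot : ∀ x ∈ S, ∀ y ∉ S, x < y)
    (hLcard : L.card = k - t) (hLtop : ∀ x ∈ L, ∀ y ∉ L, y < x)
    (Y : Finset X) (hYcard : Y.card = t - 1)
    (a b : X) (hab : a < b)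
    (ha : a ∉ S ∪ L ∪ Y) :
    ∃ Q : Finset X, Q.card = k ∧ Y ∪ {a, b} ⊆ Q ∧ Q ⊆ Y ∪ {a, b} ∪ S ∪ L ∧
      IsNthSmallest Q t a := by
  simp only [mem_union, not_or] at ha
  obtain ⟨⟨haS, haL⟩, -⟩ := ha
  have hlow : #(Y.filter (· < a)) ≤ t - 1 := hYcard ▸ card_filter_le _ _
  have hhigh : #(insert b (Y.filter (a < ·))) ≤ k - t := by
    have := card_filter_le Y (a < ·)
    have := card_insert_le b (Y.filter (a < ·))
    omega
  obtain ⟨Q, hQcard, hYQ, hQ, hQa⟩ := exists_card_eq_isNthSmallest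
    (P := Y.filter (· < a) ∪ S) (U := insert b (Y.filter (a < ·)) ∪ L)
    subset_union_left
    (by simp only [mem_union, mem_filter]; rintro x (hx | hx); exacts [hx.2, hSbot x hx a haS])
    subset_union_left
    (by
      simp only [mem_union, mem_insert, mem_filter]
      rintro x ((rfl | hx) | hx); exacts [hab, hx.2, hLtop x hx a haL])
    hlow (hScard ▸ card_le_card subset_union_right)
    hhigh (hLcard ▸ card_le_card subset_union_right)
  refine ⟨Q, by omega, subset_trans ?_ hYQ, hQ.trans ?_, by rwa [Nat.sub_add_cancel ht1] at hQa⟩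
  · intro x
    simp only [mem_union, mem_insert, mem_singleton, mem_filter]
    rcases lt_trichotomy x a with h | h | h <;> tauto
  · intro x
    simp only [mem_union, mem_insert, mem_singleton, mem_filter]
    tauto

/-- Let `X` have `n ≥ k + 1` elements, `1 ≤ t`, `2t ≤ k`. Let `S` be
the set of the `t - 1` smallest and `L` the set of the `k - t` largest elements of `X`.
For any reference set `Y` of size `t - 1` and any `a < b` outside `S ∪ L ∪ Y`, there is
a `k`-element query `Q` with `Y ∪ {a, b} ⊆ Q ⊆ Y ∪ {a, b} ∪ S ∪ L` whose `t`-th smallest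
element is `a`. -/
theorem stmt9 {X : Type*} [Fintype X] [LinearOrder X] [DecidableEq X] (n k t : ℕ)
    (hn : Fintype.card X = n) (ht1 : 1 ≤ t) (hk : 2 * t ≤ k) (hnk : k + 1 ≤ n)
    (S L : Finset X)
    (hScard : S.card = t - 1) (hSbot : ∀ x ∈ S, ∀ y ∉ S, x < y)
    (hLcard : L.card = k - t) (hLtop : ∀ x ∈ L, ∀ y ∉ L, y < x)
    (Y : Finset X) (hYcard : Y.card = t - 1)
    (a b : X) (hab : a < b)
    (ha : a ∉ S ∪ L ∪ Y) (hb : b ∉ S ∪ L ∪ Y) :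
    ∃ Q : Finset X, Q.card = k ∧ Y ∪ {a, b} ⊆ Q ∧ Q ⊆ Y ∪ {a, b} ∪ S ∪ L ∧
      IsNthSmallest Q t a :=
  stmt9_general k t ht1 hk S L hScard hSbot hLcard hLtop Y hYcard a b hab ha
end

section
/- Let X be a finite set of n elements with a linear order, let k be an integer with k ≤ n, and let t_1 < t_2 < ... < t_s be integers with 1 ≤ t_1 and t_s ≤ k. Let S' be the set of the t_s − 1 smallest elements of X. Then for every k-element subset Q of X with S' ⊆ Q: (i) the t_s-th smallest element of Q equals the minimum of Q \ S', and (ii) for every i < s, the t_i-th smallest element of Q belongs to S'. Hence by always including S' in a query, a (k, t_1, ..., t_s) scale simulates a (k − t_s + 1, 1) scale on X \ S'. -/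
open Finset

section InitialSegment

variable {X : Type*} [LinearOrder X] {Q S : Finset X} {x : X}

theorem ncard_setOf_mem_and_lt (Q : Finset X) (x : X) :
    {y | y ∈ Q ∧ y < x}.ncard = #(Q.filter (· < x)) := by
  rw [← Set.ncard_coe_finset, coe_filter]

theorem subset_filter_lt_of_notMem (hSQ : S ⊆ Q) (hS : ∀ a ∈ S, ∀ b ∉ S, a < b)
    (hx : x ∉ S) : S ⊆ Q.filter (· < x) :=
  fun a ha => mem_filter.2 ⟨hSQ ha, hS a ha x hx⟩

theorem card_filter_lt_lt_card_of_mem [DecidableEq X] (hS : ∀ a ∈ S, ∀ b ∉ S, a < b)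
    (hx : x ∈ S) : #(Q.filter (· < x)) < #S := by
  have hsub : Q.filter (· < x) ⊆ S.erase x := by
    intro a ha
    have hax : a < x := (mem_filter.1 ha).2
    refine mem_erase.2 ⟨hax.ne, ?_⟩
    by_contra haS
    exact lt_asymm hax (hS x hx a haS)
  exact (card_le_card hsub).trans_lt (card_erase_lt_of_mem hx)

theorem isLeast_sdiff_iff_card_filter_lt [DecidableEq X] (hSQ : S ⊆ Q)
    (hS : ∀ a ∈ S, ∀ b ∉ S, a < b) (hxQ : x ∈ Q) :
    IsLeast ↑(Q \ S) x ↔ #(Q.filter (· < x)) = #S := by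
  constructor
  · rintro ⟨hxQS, hleast⟩
    have hxS : x ∉ S := (mem_sdiff.1 hxQS).2
    suffices Q.filter (· < x) = S by rw [this]
    refine Subset.antisymm (fun a ha => ?_) (subset_filter_lt_of_notMem hSQ hS hxS)
    obtain ⟨haQ, hax⟩ := mem_filter.1 ha
    by_contra haS
    exact (hleast (mem_sdiff.2 ⟨haQ, haS⟩)).not_gt hax
  · intro hcard
    have hxS : x ∉ S := fun hxS => (card_filter_lt_lt_card_of_mem hS hxS).ne hcard
    have hfilter : Q.filter (· < x) = S :=
      (eq_of_subset_of_card_le (subset_filter_lt_of_notMem hSQ hS hxS) hcard.le).symm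
    refine ⟨mem_sdiff.2 ⟨hxQ, hxS⟩, fun a ha => ?_⟩
    obtain ⟨haQ, haS⟩ := mem_sdiff.1 ha
    by_contra hxa
    exact haS (hfilter ▸ mem_filter.2 ⟨haQ, not_le.1 hxa⟩)

theorem isNthSmallest_iff_isLeast_sdiff [DecidableEq X] (hSQ : S ⊆ Q)
    (hS : ∀ a ∈ S, ∀ b ∉ S, a < b) {t : ℕ} (hS_card : #S = t - 1) :
    IsNthSmallest Q t x ↔ IsLeast ↑(Q \ S) x := by
  refine ⟨fun ⟨hxQ, hcount⟩ => ?_, fun hleast => ?_⟩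
  · rw [ncard_setOf_mem_and_lt, ← hS_card] at hcount
    exact (isLeast_sdiff_iff_card_filter_lt hSQ hS hxQ).2 hcount
  · have hxQ : x ∈ Q := (mem_sdiff.1 hleast.1).1
    refine ⟨hxQ, ?_⟩
    rw [ncard_setOf_mem_and_lt, (isLeast_sdiff_iff_card_filter_lt hSQ hS hxQ).1 hleast, hS_card]

theorem mem_of_isNthSmallest (hSQ : S ⊆ Q) (hS : ∀ a ∈ S, ∀ b ∉ S, a < b) {r : ℕ}
    (hr : 0 < r) (hrS : r ≤ #S) (hx : IsNthSmallest Q r x) : x ∈ S := by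
  obtain ⟨-, hcount⟩ := hx
  rw [ncard_setOf_mem_and_lt] at hcount
  by_contra hxS
  have := card_le_card (subset_filter_lt_of_notMem hSQ hS hxS)
  omega

end InitialSegment

theorem stmt13 {X : Type*} [LinearOrder X] [DecidableEq X] (k s : ℕ)
    (hs : 1 ≤ s)
    (t : Fin s → ℕ) (hmono : StrictMono t)
    (ht1 : 1 ≤ t ⟨0, by omega⟩)
    (S' : Finset X) (hScard : S'.card = t ⟨s - 1, by omega⟩ - 1)
    (hSbot : ∀ x ∈ S', ∀ y ∉ S', x < y) :
    ∀ Q : Finset X, Q.card = k → S' ⊆ Q →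
      (∀ x : X, IsNthSmallest Q (t ⟨s - 1, by omega⟩) x ↔ IsLeast ↑(Q \ S') x) ∧
      (∀ i : Fin s, (i : ℕ) < s - 1 →
        ∀ x : X, IsNthSmallest Q (t i) x → x ∈ S') := by
  intro Q _ hSQ
  refine ⟨fun x => isNthSmallest_iff_isLeast_sdiff hSQ hSbot hScard, fun i hi x hx => ?_⟩
  have ht_pos : 1 ≤ t i := ht1.trans (hmono.monotone (Fin.le_def.2 (Nat.zero_le _)))
  have ht_lt : t i < t ⟨s - 1, by omega⟩ := hmono (Fin.lt_def.2 hi)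
  exact mem_of_isNthSmallest hSQ hSbot ht_pos (by omega) hx
end
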